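/- arXiv:2002.07963 — 2 statements merged into one kernel-verified Lean document; each statement's English description precedes it below -/
import Mathlib

section
/- (PE.2 plus uniform equicontinuity implies PE.1) Let x : ℝ → X ⊆ ℝ^d be a trajectory and H an RKHS of functions on X. Suppose there exist T₀, γ, Δ > 0 such that for all t ≥ T₀ and all g ∈ H with ‖g‖_H = 1, ∫_t^{t+Δ} g(x(τ))² dτ ≥ γ. Suppose further that the family {τ ↦ g(x(τ)) : ‖g‖_H = 1} is uniformly equicontinuous in τ: for every ε > 0 there is δ(ε) > 0 such that |s − s'| < δ(ε) implies |g(x(s)) − g(x(s'))| < ε for all unit-norm g. Then there exist T₀', γ', δ', Δ' > 0 such that for every t ≥ T₀' and every unit-norm g ∈ H, there exists s ∈ [t, t+Δ'] with |∫_s^{s+δ'} g(x(τ)) dτ| ≥ γ' > 0. -/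
open MeasureTheory

/-- PE.2 plus uniform equicontinuity of the Koopman image of the unit
sphere implies PE.1.  `ev x : H →L[ℝ] ℝ` are the evaluation functionals of an RKHS
over `X ⊆ ℝ^d`, so `ev (x τ) g = g(x(τ))`. -/
theorem pe2_and_equicontinuity_implies_pe1 {d : ℕ}
    {H : Type*} [NormedAddCommGroup H] [InnerProductSpace ℝ H]
    (X : Set (EuclideanSpace ℝ (Fin d)))
    (x : ℝ → EuclideanSpace ℝ (Fin d)) (hx : ∀ t : ℝ, x t ∈ X)
    (hxc : Continuous x)
    (ev : EuclideanSpace ℝ (Fin d) → H →L[ℝ] ℝ)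
    (hcont : ∀ g : H, Continuous fun τ : ℝ => ev (x τ) g)
    (T₀ γ Δ : ℝ) (hT₀ : 0 < T₀) (hγ : 0 < γ) (hΔ : 0 < Δ)
    (hPE2 : ∀ t ≥ T₀, ∀ g : H, ‖g‖ = 1 →
      γ ≤ ∫ τ in t..(t + Δ), (ev (x τ) g) ^ 2)
    (hequi : ∀ ε > (0 : ℝ), ∃ δ > (0 : ℝ), ∀ g : H, ‖g‖ = 1 →
      ∀ s s' : ℝ, |s - s'| < δ → |ev (x s) g - ev (x s') g| < ε) :
    ∃ T₀' > (0 : ℝ), ∃ γ' > (0 : ℝ), ∃ δ' > (0 : ℝ), ∃ Δ' > (0 : ℝ),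
      ∀ t ≥ T₀', ∀ g : H, ‖g‖ = 1 →
        ∃ s ∈ Set.Icc t (t + Δ'), γ' ≤ |∫ τ in s..(s + δ'), ev (x τ) g| := by
  set c := Real.sqrt (γ / Δ) with hc
  have hc0 : 0 < c := Real.sqrt_pos.mpr (div_pos hγ hΔ)
  obtain ⟨δ, hδ0, hδ⟩ := hequi (c / 2) (by positivity)
  refine ⟨T₀, hT₀, (δ / 2) * (c / 2), by positivity, δ / 2, by positivity, Δ, hΔ, ?_⟩
  intro t ht g hg
  set f : ℝ → ℝ := fun τ => ev (x τ) g with hf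
  have hfc : Continuous f := hcont g
  have hne : (Set.Icc t (t + Δ)).Nonempty := Set.nonempty_Icc.mpr (by linarith)
  obtain ⟨s, hsmem, hsmax⟩ :=
    isCompact_Icc.exists_isMaxOn hne ((hfc.pow 2).continuousOn)
  have htΔ : t ≤ t + Δ := by linarith
  have hint : ∫ τ in t..(t + Δ), (f τ) ^ 2 ≤ ∫ τ in t..(t + Δ), (f s) ^ 2 := by
    apply intervalIntegral.integral_mono_on htΔ
    · exact (hfc.pow 2).intervalIntegrable _ _
    · exact intervalIntegrable_const
    · intro τ hτ
      exact hsmax hτ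
  have hconst : ∫ τ in t..(t + Δ), (f s) ^ 2 = Δ * (f s) ^ 2 := by
    simp [intervalIntegral.integral_const]
  have h1 : γ ≤ Δ * (f s) ^ 2 := le_trans (hPE2 t ht g hg) (hconst ▸ hint)
  have h2 : c ≤ |f s| := by
    rw [hc, ← Real.sqrt_sq_eq_abs]
    apply Real.sqrt_le_sqrt
    rw [div_le_iff₀ hΔ]
    nlinarith
  have hδ2 : (0:ℝ) < δ / 2 := by linarith
  have hss : s ≤ s + δ / 2 := by linarith
  have hfint : IntervalIntegrable f volume s (s + δ / 2) := hfc.intervalIntegrable _ _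
  have hnear : ∀ τ ∈ Set.Icc s (s + δ / 2), |f s - f τ| < c / 2 := by
    intro τ hτ
    apply hδ g hg
    rw [abs_sub_comm, abs_sub_lt_iff]
    constructor <;> [linarith [hτ.1, hτ.2]; linarith [hτ.1, hτ.2]]
  refine ⟨s, hsmem, ?_⟩
  rcases le_or_gt 0 (f s) with hsign | hsign
  · -- f s ≥ c, so f τ ≥ c/2 on the interval
    have hfs : c ≤ f s := by rwa [abs_of_nonneg hsign] at h2
    have hlow : ∀ τ ∈ Set.Icc s (s + δ / 2), c / 2 ≤ f τ := by
      intro τ hτ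
      have := hnear τ hτ
      rw [abs_sub_lt_iff] at this
      linarith [this.1]
    have : ∫ τ in s..(s + δ / 2), (c / 2 : ℝ) ≤ ∫ τ in s..(s + δ / 2), f τ := by
      apply intervalIntegral.integral_mono_on hss intervalIntegrable_const hfint
      exact hlow
    rw [intervalIntegral.integral_const, smul_eq_mul] at this
    have h3 : (δ / 2) * (c / 2) ≤ ∫ τ in s..(s + δ / 2), f τ := by
      calc (δ / 2) * (c / 2) = (s + δ / 2 - s) * (c / 2) := by ring_nf
        _ ≤ _ := this
    exact le_trans h3 (le_abs_self _)
  · -- f s ≤ -c, so f τ ≤ -c/2 on the interval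
    have hfs : f s ≤ -c := by
      rw [abs_of_neg hsign] at h2
      linarith
    have hhigh : ∀ τ ∈ Set.Icc s (s + δ / 2), f τ ≤ -(c / 2) := by
      intro τ hτ
      have := hnear τ hτ
      rw [abs_sub_lt_iff] at this
      linarith [this.2]
    have : ∫ τ in s..(s + δ / 2), f τ ≤ ∫ τ in s..(s + δ / 2), (-(c / 2) : ℝ) := by
      apply intervalIntegral.integral_mono_on hss hfint intervalIntegrable_const
      exact hhigh
    rw [intervalIntegral.integral_const, smul_eq_mul] at this
    have h3 : ∫ τ in s..(s + δ / 2), f τ ≤ -((δ / 2) * (c / 2)) := by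
      calc (∫ τ in s..(s + δ / 2), f τ) ≤ (s + δ / 2 - s) * (-(c / 2)) := this
        _ = -((δ / 2) * (c / 2)) := by ring
    calc (δ / 2) * (c / 2) ≤ -(∫ τ in s..(s + δ / 2), f τ) := by linarith
      _ ≤ |∫ τ in s..(s + δ / 2), f τ| := neg_le_abs _
end

section
/- Under the hypotheses of the Lyapunov derivative lemma with Q positive definite, the function V(t) = ⟨x̃(t), P x̃(t)⟩ + (1/μ)‖f̃(t)‖²_H is nonincreasing, and ∫_{t₀}^{∞} ⟨x̃(τ), Q x̃(τ)⟩ dτ ≤ V(t₀) < ∞; in particular x̃ ∈ L²([t₀,∞), ℝ^d). -/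
/-!
Along trajectories `V' = -⟪x̃, Q x̃⟫ ≤ 0`: the Lyapunov equation turns the drift `A x̃` into `-Q`,
and the adaptation law for `f̃` is exactly what cancels the cross terms `2 E_t f̃ ⟪B, P x̃⟫`.
Hence `V ≥ 0` is antitone, so it converges, and the improper integral of `-V'` over `[t₀, ∞)`
is `V t₀ - lim V ≤ V t₀`. Finally `Q` is coercive on the finite-dimensional state space (it is
bounded below on the unit sphere), so `‖x̃‖²` is dominated by a multiple of `⟪x̃, Q x̃⟫`.
-/

open RealInnerProductSpace MeasureTheory Filter Set

section DissipativeBound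

variable {V g : ℝ → ℝ}

lemma tendsto_iInf_of_hasDerivAt_neg (hV : ∀ t, HasDerivAt V (-g t) t) (hg : ∀ t, 0 ≤ g t)
    (hV0 : ∀ t, 0 ≤ V t) : Tendsto V atTop (nhds (⨅ t, V t)) :=
  tendsto_atTop_ciInf (antitone_of_hasDerivAt_nonpos hV fun t => neg_nonpos.2 (hg t))
    ⟨0, forall_mem_range.2 hV0⟩

lemma integrableOn_Ioi_of_hasDerivAt_neg (hV : ∀ t, HasDerivAt V (-g t) t) (hg : ∀ t, 0 ≤ g t)
    (hV0 : ∀ t, 0 ≤ V t) (t₀ : ℝ) : IntegrableOn g (Ioi t₀) := by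
  simpa using (integrableOn_Ioi_deriv_of_nonpos' (fun t _ => hV t)
    (fun t _ => neg_nonpos.2 (hg t)) (tendsto_iInf_of_hasDerivAt_neg hV hg hV0)).neg

lemma integral_Ioi_le_of_hasDerivAt_neg (hV : ∀ t, HasDerivAt V (-g t) t) (hg : ∀ t, 0 ≤ g t)
    (hV0 : ∀ t, 0 ≤ V t) (t₀ : ℝ) : ∫ t in Ioi t₀, g t ≤ V t₀ := by
  have h := integral_Ioi_of_hasDerivAt_of_nonpos' (a := t₀) (fun t _ => hV t)
    (fun t _ => neg_nonpos.2 (hg t)) (tendsto_iInf_of_hasDerivAt_neg hV hg hV0)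
  rw [integral_neg] at h
  linarith [le_ciInf hV0]

end DissipativeBound

section InnerProductSpace

variable {E : Type*} [NormedAddCommGroup E] [InnerProductSpace ℝ E]

lemma inner_apply_self_nonneg_of_pos {Q : E →L[ℝ] E} (hQpos : ∀ v : E, v ≠ 0 → 0 < ⟪v, Q v⟫)
    (v : E) : 0 ≤ ⟪v, Q v⟫ := by
  rcases eq_or_ne v 0 with rfl | hv
  · simp
  · exact (hQpos v hv).le

lemma exists_pos_mul_norm_sq_le_inner_apply_self [FiniteDimensional ℝ E] {Q : E →L[ℝ] E}
    (hQpos : ∀ v : E, v ≠ 0 → 0 < ⟪v, Q v⟫) : ∃ c > 0, ∀ v : E, c * ‖v‖ ^ 2 ≤ ⟪v, Q v⟫ := by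
  obtain ⟨c, hc, hcQ⟩ := (isCompact_sphere (0 : E) 1).exists_forall_le'
    (f := fun v => ⟪v, Q v⟫) (continuous_id.inner Q.continuous).continuousOn
    fun u hu => hQpos u (ne_zero_of_mem_unit_sphere ⟨u, hu⟩)
  refine ⟨c, hc, fun v => ?_⟩
  rcases eq_or_ne v 0 with rfl | hv
  · simp
  have hv' : 0 < ‖v‖ := norm_pos_iff.2 hv
  have hu := hcQ (‖v‖⁻¹ • v) (by simp [norm_smul, hv'.ne'])
  rw [map_smul, real_inner_smul_left, real_inner_smul_right] at hu
  have : c * ‖v‖ ^ 2 ≤ ‖v‖⁻¹ * (‖v‖⁻¹ * ⟪v, Q v⟫) * ‖v‖ ^ 2 := by gcongr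
  rwa [show ‖v‖⁻¹ * (‖v‖⁻¹ * ⟪v, Q v⟫) * ‖v‖ ^ 2 = ⟪v, Q v⟫ by field_simp] at this

lemma Integrable.norm_sq_of_coercive {α : Type*} [MeasurableSpace α] {ν : Measure α}
    {Q : E →L[ℝ] E} {c : ℝ} (hc : 0 < c) (hcQ : ∀ v : E, c * ‖v‖ ^ 2 ≤ ⟪v, Q v⟫) {x : α → E}
    (hx : AEStronglyMeasurable x ν) (hQx : Integrable (fun a => ⟪x a, Q (x a)⟫) ν) :
    Integrable (fun a => ‖x a‖ ^ 2) ν := by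
  refine (hQx.const_mul c⁻¹).mono' (hx.norm.pow 2) (ae_of_all _ fun a => ?_)
  rw [Real.norm_of_nonneg (by positivity), le_inv_mul_iff₀ hc]
  exact hcQ (x a)

lemma HasDerivAt.inner_apply_self {P : E →L[ℝ] E} (hPsym : ∀ v w : E, ⟪P v, w⟫ = ⟪v, P w⟫)
    {x : ℝ → E} {x' : E} {t : ℝ} (hx : HasDerivAt x x' t) :
    HasDerivAt (fun t => ⟪x t, P (x t)⟫) (2 * ⟪x', P (x t)⟫) t := by
  refine (hx.inner ℝ (P.hasFDerivAt.comp_hasDerivAt t hx)).congr_deriv ?_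
  rw [Function.comp_apply, ← hPsym, real_inner_comm]
  ring

variable {H : Type*} [NormedAddCommGroup H] [InnerProductSpace ℝ H] [CompleteSpace H]
  [CompleteSpace E]

lemma inner_adjoint_smulRight_apply (ℓ : H →L[ℝ] ℝ) (B : E) (f : H) (v : E) :
    ⟪f, ContinuousLinearMap.adjoint (ℓ.smulRight B) v⟫ = ℓ f * ⟪B, v⟫ := by
  rw [ContinuousLinearMap.adjoint_inner_right, ContinuousLinearMap.smulRight_apply,
    real_inner_smul_left]

lemma hasDerivAt_lyapunov {A P Q : E →L[ℝ] E} {B : E}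
    (hPsym : ∀ v w : E, ⟪P v, w⟫ = ⟪v, P w⟫)
    (hLyap : ∀ v w : E, ⟪A v, P w⟫ + ⟪v, P (A w)⟫ = -⟪v, Q w⟫)
    {μ : ℝ} (hμ : μ ≠ 0) {ℓ : H →L[ℝ] ℝ} {x : ℝ → E} {f : ℝ → H} {t : ℝ}
    (hx : HasDerivAt x (A (x t) + ℓ (f t) • B) t)
    (hf : HasDerivAt f (-(μ • (ContinuousLinearMap.adjoint (ℓ.smulRight B)) (P (x t)))) t) :
    HasDerivAt (fun t => ⟪x t, P (x t)⟫ + (1 / μ) * ‖f t‖ ^ 2) (-⟪x t, Q (x t)⟫) t := by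
  refine ((hx.inner_apply_self hPsym).add (hf.norm_sq.const_mul (1 / μ))).congr_deriv ?_
  have hA : ⟪x t, P (A (x t))⟫ = ⟪A (x t), P (x t)⟫ := by rw [← hPsym, real_inner_comm]
  rw [inner_add_left, real_inner_smul_left, inner_neg_right, real_inner_smul_right,
    inner_adjoint_smulRight_apply, ← hLyap, hA]
  field_simp
  ring

end InnerProductSpace

theorem lyapunov_nonincreasing_and_L2_general {d : ℕ} {H : Type*} [NormedAddCommGroup H]
    [InnerProductSpace ℝ H] [CompleteSpace H]
    (A P Q : EuclideanSpace ℝ (Fin d) →L[ℝ] EuclideanSpace ℝ (Fin d))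
    (B : EuclideanSpace ℝ (Fin d))
    (hPsym : ∀ v w : EuclideanSpace ℝ (Fin d), ⟪P v, w⟫ = ⟪v, P w⟫)
    (hPpos : ∀ v : EuclideanSpace ℝ (Fin d), v ≠ 0 → 0 < ⟪v, P v⟫)
    (hQpos : ∀ v : EuclideanSpace ℝ (Fin d), v ≠ 0 → 0 < ⟪v, Q v⟫)
    (hLyap : ∀ v w : EuclideanSpace ℝ (Fin d),
      ⟪A v, P w⟫ + ⟪v, P (A w)⟫ = -⟪v, Q w⟫)
    (μ : ℝ) (hμ : 0 < μ)
    (ev : ℝ → H →L[ℝ] ℝ)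
    (xe : ℝ → EuclideanSpace ℝ (Fin d)) (fe : ℝ → H)
    (hxe : ∀ t : ℝ, HasDerivAt xe (A (xe t) + (ev t (fe t)) • B) t)
    (hfe : ∀ t : ℝ, HasDerivAt fe
      (-(μ • (ContinuousLinearMap.adjoint ((ev t).smulRight B)) (P (xe t)))) t)
    (t₀ : ℝ) :
    (AntitoneOn (fun t => ⟪xe t, P (xe t)⟫ + (1 / μ) * ‖fe t‖ ^ 2) (Set.Ici t₀)) ∧
      IntegrableOn (fun τ => ⟪xe τ, Q (xe τ)⟫) (Set.Ici t₀) ∧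
      (∫ τ in Set.Ici t₀, ⟪xe τ, Q (xe τ)⟫) ≤
        ⟪xe t₀, P (xe t₀)⟫ + (1 / μ) * ‖fe t₀‖ ^ 2 ∧
      IntegrableOn (fun τ => ‖xe τ‖ ^ 2) (Set.Ici t₀) := by
  have hV t := hasDerivAt_lyapunov hPsym hLyap hμ.ne' (hxe t) (hfe t)
  have hg t : 0 ≤ ⟪xe t, Q (xe t)⟫ := inner_apply_self_nonneg_of_pos hQpos _
  have hV0 t : 0 ≤ ⟪xe t, P (xe t)⟫ + (1 / μ) * ‖fe t‖ ^ 2 :=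
    add_nonneg (inner_apply_self_nonneg_of_pos hPpos _) (by positivity)
  have hQint : IntegrableOn (fun τ => ⟪xe τ, Q (xe τ)⟫) (Ici t₀) :=
    (integrableOn_Ici_iff_integrableOn_Ioi).2
      (integrableOn_Ioi_of_hasDerivAt_neg hV hg hV0 t₀)
  obtain ⟨c, hc, hcQ⟩ := exists_pos_mul_norm_sq_le_inner_apply_self hQpos
  have hxe_cont : Continuous xe := continuous_iff_continuousAt.2 fun t => (hxe t).continuousAt
  refine ⟨(antitone_of_hasDerivAt_nonpos hV fun t => neg_nonpos.2 (hg t)).antitoneOn _, hQint,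
    ?_, Integrable.norm_sq_of_coercive hc hcQ hxe_cont.aestronglyMeasurable hQint⟩
  rw [integral_Ici_eq_integral_Ioi]
  exact integral_Ioi_le_of_hasDerivAt_neg hV hg hV0 t₀

/-- under the Lyapunov-derivative hypotheses with `Q` positive
definite, `V` is nonincreasing and `∫_{t₀}^∞ ⟨x̃, Q x̃⟩ ≤ V(t₀) < ∞`; in
particular `x̃ ∈ L²([t₀,∞), ℝ^d)`. -/
theorem lyapunov_nonincreasing_and_L2 {d : ℕ} {H : Type*} [NormedAddCommGroup H]
    [InnerProductSpace ℝ H] [CompleteSpace H]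
    (A P Q : EuclideanSpace ℝ (Fin d) →L[ℝ] EuclideanSpace ℝ (Fin d))
    (B : EuclideanSpace ℝ (Fin d))
    (hPsym : ∀ v w : EuclideanSpace ℝ (Fin d), ⟪P v, w⟫ = ⟪v, P w⟫)
    (hPpos : ∀ v : EuclideanSpace ℝ (Fin d), v ≠ 0 → 0 < ⟪v, P v⟫)
    (hQsym : ∀ v w : EuclideanSpace ℝ (Fin d), ⟪Q v, w⟫ = ⟪v, Q w⟫)
    (hQpos : ∀ v : EuclideanSpace ℝ (Fin d), v ≠ 0 → 0 < ⟪v, Q v⟫)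
    (hLyap : ∀ v w : EuclideanSpace ℝ (Fin d),
      ⟪A v, P w⟫ + ⟪v, P (A w)⟫ = -⟪v, Q w⟫)
    (μ : ℝ) (hμ : 0 < μ)
    (ev : ℝ → H →L[ℝ] ℝ)
    (xe : ℝ → EuclideanSpace ℝ (Fin d)) (fe : ℝ → H)
    (hxe : ∀ t : ℝ, HasDerivAt xe (A (xe t) + (ev t (fe t)) • B) t)
    (hfe : ∀ t : ℝ, HasDerivAt fe
      (-(μ • (ContinuousLinearMap.adjoint ((ev t).smulRight B)) (P (xe t)))) t)
    (t₀ : ℝ) :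
    (AntitoneOn (fun t => ⟪xe t, P (xe t)⟫ + (1 / μ) * ‖fe t‖ ^ 2) (Set.Ici t₀)) ∧
      IntegrableOn (fun τ => ⟪xe τ, Q (xe τ)⟫) (Set.Ici t₀) ∧
      (∫ τ in Set.Ici t₀, ⟪xe τ, Q (xe τ)⟫) ≤
        ⟪xe t₀, P (xe t₀)⟫ + (1 / μ) * ‖fe t₀‖ ^ 2 ∧
      IntegrableOn (fun τ => ‖xe τ‖ ^ 2) (Set.Ici t₀) :=
  lyapunov_nonincreasing_and_L2_general A P Q B hPsym hPpos hQpos hLyap μ hμ ev xe fe hxe hfe t₀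
end
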